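/- arXiv:2202.02561 — 2 statements merged into one kernel-verified Lean document; each statement's English description precedes it below -/
import Mathlib

section
/- Assume (A) and (B). Then for every λ > 0 the function u_λ is C̃₃-semiconcave with C̃₃ := √(2(C₁ + C₂) + 1), i.e. u_λ(x+h) + u_λ(x−h) − 2u_λ(x) ≤ C̃₃ |h|² for all x, h ∈ ℝⁿ; in particular the semiconcavity constant is independent of λ. -/
open MeasureTheory Filter Metric Set Topology

noncomputable section

/-- `n`-dimensional Euclidean space. -/
abbrev Euc (n : ℕ) := EuclideanSpace ℝ (Fin n)

variable {n : ℕ}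

/-- Trajectory of the control system `ẏ = α`, `y 0 = x`. -/
def traj (x : Euc n) (α : ℝ → Euc n) (t : ℝ) : Euc n :=
  x + ∫ s in Set.Ioc (0 : ℝ) t, α s

/-- The sup norm `‖f‖∞ = sup_x |f x|`. -/
def supNorm (f : Euc n → ℝ) : ℝ := ⨆ x, |f x|

/-- Running cost of the infinite-horizon discounted control problem. -/
def dCost (f : Euc n → ℝ) (lam : ℝ) (x : Euc n) (α : ℝ → Euc n) (t : ℝ) : ℝ :=
  ((1 / 2) * ‖α t‖ ^ 2 + f (traj x α t)) * Real.exp (-(lam * t))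

/-- Value function `u_λ` of the infinite-horizon discounted control problem:
the infimum of the total discounted cost over measurable controls (with finite cost). -/
def uLam (f : Euc n → ℝ) (lam : ℝ) (x : Euc n) : ℝ :=
  sInf {c : ℝ | ∃ α : ℝ → Euc n, Measurable α ∧
    IntegrableOn (dCost f lam x α) (Set.Ioi 0) volume ∧
    c = ∫ t in Set.Ioi (0 : ℝ), dCost f lam x α t}

/-- Running cost of the finite-horizon control problem. -/
def fCost (f : Euc n → ℝ) (x : Euc n) (α : ℝ → Euc n) (s : ℝ) : ℝ :=
  (1 / 2) * ‖α s‖ ^ 2 + f (traj x α s)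

/-- Value function `u(x,t)` of the finite-horizon control problem. -/
def uT (f : Euc n → ℝ) (x : Euc n) (t : ℝ) : ℝ :=
  sInf {c : ℝ | ∃ α : ℝ → Euc n, Measurable α ∧
    IntegrableOn (fCost f x α) (Set.Ioc 0 t) volume ∧
    c = ∫ s in Set.Ioc (0 : ℝ) t, fCost f x α s}

end

/-!
Fix an `ε`-optimal control `α` from `x`, with trajectory `y`. From `x ± h` use `α ∓ h / T` on
`(0, T]` and `α` afterwards: the two trajectories are `y(t) ± (1 - t/T) h` up to time `T` and
`y(t)` after it. By the parallelogram law the kinetic terms of the second difference contribute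
`|h|²/T²`, and semiconcavity of `f` bounds the potential terms by `C₂ (1 - t/T) |h|²` (here
`C₂ ≥ 0` since `f` is bounded below). Integrating over `(0, T]` gives `(1/T + C₂ T/2) |h|²`, and
`T = 2 / √(2C₂ + 1)` makes this at most `√(2C₂ + 1) |h|²`.
-/

theorem nonneg_of_bddBelow_of_secondDiff_le {E : Type*} [NormedAddCommGroup E] [NormedSpace ℝ E]
    [Nontrivial E] {f : E → ℝ} {a C : ℝ} (hlo : ∀ x, a ≤ f x)
    (hsc : ∀ x h, f (x + h) + f (x - h) - 2 * f x ≤ C * ‖h‖ ^ 2) : 0 ≤ C := by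
  by_contra! hC
  obtain ⟨h, hh⟩ := exists_norm_eq E (Real.sqrt_nonneg ((2 * (f 0 - a) + 1) / -C))
  have hCh : C * ‖h‖ ^ 2 = -(2 * (f 0 - a) + 1) := by
    rw [hh, Real.sq_sqrt (div_nonneg (by linarith [hlo 0]) (by linarith))]
    field_simp [hC.ne]
  linarith [hsc 0 h, hlo (0 + h), hlo (0 - h)]

theorem runningCost_secondDiff_le {E : Type*} [NormedAddCommGroup E] [InnerProductSpace ℝ E]
    {f : E → ℝ} {C : ℝ} (hC : 0 ≤ C)
    (hsc : ∀ x h, f (x + h) + f (x - h) - 2 * f x ≤ C * ‖h‖ ^ 2)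
    (a u y h : E) {w e : ℝ} (hw0 : 0 ≤ w) (hw1 : w ≤ 1) (he0 : 0 ≤ e) (he1 : e ≤ 1) :
    ((1 / 2) * ‖a - u‖ ^ 2 + f (y + w • h)) * e + ((1 / 2) * ‖a + u‖ ^ 2 + f (y - w • h)) * e
      - 2 * (((1 / 2) * ‖a‖ ^ 2 + f y) * e) ≤ ‖u‖ ^ 2 + C * w * ‖h‖ ^ 2 := by
  have hpar : ‖a - u‖ ^ 2 + ‖a + u‖ ^ 2 = 2 * ‖a‖ ^ 2 + 2 * ‖u‖ ^ 2 := by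
    rw [norm_sub_sq_real, norm_add_sq_real]; ring
  have hf : f (y + w • h) + f (y - w • h) - 2 * f y ≤ C * w * ‖h‖ ^ 2 := by
    have hw := hsc y (w • h)
    rw [norm_smul, Real.norm_of_nonneg hw0, mul_pow] at hw
    nlinarith [mul_nonneg (mul_nonneg hC (sq_nonneg ‖h‖)) (mul_nonneg hw0 (sub_nonneg.2 hw1))]
  calc _ = (‖u‖ ^ 2 + (f (y + w • h) + f (y - w • h) - 2 * f y)) * e := by
        linear_combination (e / 2) * hpar
    _ ≤ (‖u‖ ^ 2 + C * w * ‖h‖ ^ 2) * e := by gcongr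
    _ ≤ ‖u‖ ^ 2 + C * w * ‖h‖ ^ 2 := mul_le_of_le_one_right (by positivity) he1

theorem integral_Ioc_affine_one_sub_div {T : ℝ} (hT : 0 < T) (a b : ℝ) :
    ∫ t in Ioc 0 T, (a + b * (1 - t / T)) = a * T + b * T / 2 := by
  rw [← intervalIntegral.integral_of_le hT.le, intervalIntegral.integral_add
    intervalIntegrable_const (by apply Continuous.intervalIntegrable; fun_prop),
    intervalIntegral.integral_const_mul, intervalIntegral.integral_sub intervalIntegrable_const
    (by apply Continuous.intervalIntegrable; fun_prop), intervalIntegral.integral_div, integral_id]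
  simp only [intervalIntegral.integral_const, smul_eq_mul]
  field_simp
  ring

theorem one_div_add_mul_div_two_le_sqrt {C1 C2 : ℝ} (hC1 : 0 ≤ C1) (hC2 : 0 ≤ C2) :
    1 / (2 / √(2 * C2 + 1)) + C2 * (2 / √(2 * C2 + 1)) / 2 ≤ √(2 * (C1 + C2) + 1) := by
  set s := √(2 * C2 + 1)
  have hs : 0 < s := Real.sqrt_pos.2 (by linarith)
  have hs2 : s ^ 2 = 2 * C2 + 1 := Real.sq_sqrt (by linarith)
  calc _ = (s ^ 2 + 2 * C2) / (2 * s) := by field_simp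
    _ ≤ s := by rw [div_le_iff₀ (by positivity)]; nlinarith
    _ ≤ _ := Real.sqrt_le_sqrt (by linarith)

section Control

variable {n : ℕ} {f : Euc n → ℝ} {lam : ℝ} {x : Euc n} {α : ℝ → Euc n}

theorem integrableOn_exp_neg_mul_Ioi (hlam : 0 < lam) :
    IntegrableOn (fun t => Real.exp (-(lam * t))) (Ioi 0) := by
  simpa only [neg_mul] using exp_neg_integrableOn_Ioi 0 hlam

theorem uLam_le_integral {a : ℝ} (hlo : ∀ x, a ≤ f x) (hlam : 0 < lam) (hα : Measurable α)
    (hI : IntegrableOn (dCost f lam x α) (Ioi 0)) :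
    uLam f lam x ≤ ∫ t in Ioi 0, dCost f lam x α t := by
  refine csInf_le ⟨∫ t in Ioi (0 : ℝ), a * Real.exp (-(lam * t)), ?_⟩ ⟨α, hα, hI, rfl⟩
  rintro _ ⟨β, -, hβ, rfl⟩
  refine setIntegral_mono_on ((integrableOn_exp_neg_mul_Ioi hlam).const_mul a) hβ
    measurableSet_Ioi fun t _ => ?_
  exact mul_le_mul_of_nonneg_right (by nlinarith [hlo (traj x β t), sq_nonneg ‖β t‖])
    (Real.exp_pos _).le

theorem exists_integral_dCost_lt_uLam_add (hlam : 0 < lam) (x : Euc n) {ε : ℝ} (hε : 0 < ε) :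
    ∃ α, Measurable α ∧ IntegrableOn (dCost f lam x α) (Ioi 0) ∧
      ∫ t in Ioi 0, dCost f lam x α t < uLam f lam x + ε := by
  have hzero : IntegrableOn (dCost f lam x fun _ => 0) (Ioi 0) := by
    have hcost : dCost f lam x (fun _ => 0) = fun t => f x * Real.exp (-(lam * t)) := by
      funext t; simp [dCost, traj]
    exact hcost ▸ (integrableOn_exp_neg_mul_Ioi hlam).const_mul (f x)
  have hlt : uLam f lam x < uLam f lam x + ε := lt_add_of_pos_right _ hε
  obtain ⟨_, ⟨α, hα, hI, rfl⟩, hαε⟩ :=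
    exists_lt_of_csInf_lt (by exact ⟨_, _, measurable_const, hzero, rfl⟩) hlt
  exact ⟨α, hα, hI, hαε⟩

theorem memLp_two_of_integrableOn_dCost {a : ℝ} (hlo : ∀ x, a ≤ f x) (hlam : 0 ≤ lam)
    (hα : Measurable α) (hI : IntegrableOn (dCost f lam x α) (Ioi 0)) (b : ℝ) :
    MemLp α 2 (volume.restrict (Ioc 0 b)) := by
  refine (memLp_two_iff_integrable_sq_norm hα.aestronglyMeasurable).2 ?_
  have hg : IntegrableOn
      (fun t => 2 * (|dCost f lam x α t| * Real.exp (lam * b) - a)) (Ioc 0 b) :=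
    (((hI.mono_set Ioc_subset_Ioi_self).abs.mul_const _).sub
      (integrableOn_const measure_Ioc_lt_top.ne)).const_mul 2
  refine hg.mono' (hα.norm.pow_const 2).aestronglyMeasurable <|
    (ae_restrict_iff' measurableSet_Ioc).2 <| ae_of_all _ fun t ht => ?_
  have hcost :
      dCost f lam x α t * Real.exp (lam * t) = (1 / 2) * ‖α t‖ ^ 2 + f (traj x α t) := by
    rw [dCost, mul_assoc, ← Real.exp_add]; simp
  have hexp :
      dCost f lam x α t * Real.exp (lam * t) ≤ |dCost f lam x α t| * Real.exp (lam * b) :=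
    mul_le_mul (le_abs_self _) (Real.exp_le_exp.2 (mul_le_mul_of_nonneg_left ht.2 hlam))
      (Real.exp_pos _).le (abs_nonneg _)
  rw [Real.norm_of_nonneg (by positivity)]
  linarith [hlo (traj x α t)]

theorem continuousOn_traj {b : ℝ} (hα : IntegrableOn α (Ioc 0 b)) :
    ContinuousOn (traj x α) (Icc 0 b) :=
  continuousOn_const.add
    (intervalIntegral.continuousOn_primitive (hα.congr_set_ae Ioc_ae_eq_Icc.symm))

theorem integrableOn_dCost_Ioc (hf : Continuous f) {β : ℝ → Euc n} {b : ℝ}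
    (hβ : MemLp β 2 (volume.restrict (Ioc 0 b))) : IntegrableOn (dCost f lam x β) (Ioc 0 b) := by
  have hkin : IntegrableOn (fun t => (1 / 2) * ‖β t‖ ^ 2) (Ioc 0 b) :=
    (hβ.integrable_norm_pow two_ne_zero).const_mul _
  have hpot : IntegrableOn (fun t => f (traj x β t)) (Ioc 0 b) :=
    ((hf.comp_continuousOn (continuousOn_traj (hβ.integrable one_le_two))).integrableOn_compact
      isCompact_Icc).mono_set Ioc_subset_Icc_self
  rw [← integrableOn_Icc_iff_integrableOn_Ioc] at hkin hpot ⊢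
  exact (hkin.add hpot).mul_continuousOn (by fun_prop) isCompact_Icc

/-- The control that steers the trajectory from `x + v` onto that of `α` from `x` by time `T`. -/
noncomputable def shiftControl (α : ℝ → Euc n) (T : ℝ) (v : Euc n) (s : ℝ) : Euc n :=
  α s - (Ioc 0 T).indicator (fun _ => T⁻¹ • v) s

variable {T : ℝ} {v : Euc n}

theorem memLp_shiftControl {μ : Measure ℝ} [IsFiniteMeasure μ] (hα : MemLp α 2 μ) :
    MemLp (shiftControl α T v) 2 μ :=
  hα.sub ((memLp_const _).indicator measurableSet_Ioc)

theorem traj_shiftControl (hα : ∀ b, IntegrableOn α (Ioc 0 b)) (hT : 0 < T) {t : ℝ}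
    (ht : 0 ≤ t) : traj (x + v) (shiftControl α T v) t = traj x α t + (1 - min t T / T) • v := by
  have hind : ∫ s in Ioc 0 t, (Ioc 0 T).indicator (fun _ => T⁻¹ • v) s = min t T • T⁻¹ • v := by
    rw [setIntegral_indicator measurableSet_Ioc, Ioc_inter_Ioc, setIntegral_const,
      measureReal_def, Real.volume_Ioc, ENNReal.toReal_ofReal (by simp [ht, hT.le])]
    simp
  simp only [traj, shiftControl]
  rw [integral_sub (hα t)
    ((integrableOn_const measure_Ioc_lt_top.ne).indicator measurableSet_Ioc), hind, smul_smul,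
    sub_smul, one_smul, div_eq_mul_inv]
  abel

theorem dCost_shiftControl_of_lt (hα : ∀ b, IntegrableOn α (Ioc 0 b)) (hT : 0 < T) {t : ℝ}
    (ht : T < t) : dCost f lam (x + v) (shiftControl α T v) t = dCost f lam x α t := by
  have hnot : t ∉ Ioc 0 T := fun h => ht.not_ge h.2
  simp only [dCost, traj_shiftControl hα hT (hT.trans ht).le, shiftControl,
    indicator_of_notMem hnot, min_eq_right ht.le, div_self hT.ne', sub_self, zero_smul, add_zero,
    sub_zero]

theorem dCost_shiftControl_of_mem (hα : ∀ b, IntegrableOn α (Ioc 0 b)) (hT : 0 < T) {t : ℝ}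
    (ht : t ∈ Ioc 0 T) : dCost f lam (x + v) (shiftControl α T v) t =
      ((1 / 2) * ‖α t - T⁻¹ • v‖ ^ 2 + f (traj x α t + (1 - t / T) • v))
        * Real.exp (-(lam * t)) := by
  simp only [dCost, traj_shiftControl hα hT ht.1.le, shiftControl, indicator_of_mem ht,
    min_eq_left ht.2]

theorem integrableOn_dCost_shiftControl {a : ℝ} (hf : Continuous f) (hlo : ∀ x, a ≤ f x)
    (hlam : 0 ≤ lam) (hα : Measurable α) (hI : IntegrableOn (dCost f lam x α) (Ioi 0))
    (hT : 0 < T) (v : Euc n) :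
    IntegrableOn (dCost f lam (x + v) (shiftControl α T v)) (Ioi 0) := by
  have hα2 := memLp_two_of_integrableOn_dCost hlo hlam hα hI
  rw [← Ioc_union_Ioi_eq_Ioi hT.le]
  refine (integrableOn_dCost_Ioc hf (memLp_shiftControl (hα2 T))).union ?_
  refine (hI.mono_set (Ioi_subset_Ioi hT.le)).congr_fun (fun t ht => ?_) measurableSet_Ioi
  exact (dCost_shiftControl_of_lt (fun b => (hα2 b).integrable one_le_two) hT ht).symm

theorem measurable_shiftControl (hα : Measurable α) : Measurable (shiftControl α T v) :=
  hα.sub (measurable_const.indicator measurableSet_Ioc)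

theorem dCost_shiftControl_secondDiff_le {C : ℝ}
    (hsc : ∀ x h, f (x + h) + f (x - h) - 2 * f x ≤ C * ‖h‖ ^ 2) (hC : 0 ≤ C) (hlam : 0 ≤ lam)
    (hα : ∀ b, IntegrableOn α (Ioc 0 b)) (hT : 0 < T) (h : Euc n) {t : ℝ} (ht : 0 < t) :
    dCost f lam (x + h) (shiftControl α T h) t + dCost f lam (x + -h) (shiftControl α T (-h)) t
      - 2 * dCost f lam x α t
      ≤ (Ioc 0 T).indicator (fun t => ‖h‖ ^ 2 / T ^ 2 + C * ‖h‖ ^ 2 * (1 - t / T)) t := by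
  rcases le_or_gt t T with htT | htT
  · have hmem : t ∈ Ioc 0 T := ⟨ht, htT⟩
    have hw : t / T ≤ 1 := (div_le_one hT).2 htT
    have hu : ‖T⁻¹ • h‖ ^ 2 = ‖h‖ ^ 2 / T ^ 2 := by
      rw [norm_smul, Real.norm_of_nonneg (inv_pos.2 hT).le]; field_simp
    have key := runningCost_secondDiff_le hC hsc (α t) (T⁻¹ • h) (traj x α t) h
      (w := 1 - t / T) (e := Real.exp (-(lam * t))) (sub_nonneg.2 hw)
      (by linarith [div_pos ht hT]) (Real.exp_pos _).le
      (Real.exp_le_one_iff.2 (neg_nonpos.2 (mul_nonneg hlam ht.le)))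
    rw [indicator_of_mem hmem, dCost_shiftControl_of_mem hα hT hmem,
      dCost_shiftControl_of_mem hα hT hmem, smul_neg, sub_neg_eq_add, smul_neg,
      ← sub_eq_add_neg, dCost]
    linarith
  · rw [indicator_of_notMem fun hm => htT.not_ge hm.2, dCost_shiftControl_of_lt hα hT htT,
      dCost_shiftControl_of_lt hα hT htT]
    linarith

theorem uLam_add_add_uLam_sub_le {a C : ℝ} (hf : Continuous f) (hlo : ∀ x, a ≤ f x)
    (hsc : ∀ x h, f (x + h) + f (x - h) - 2 * f x ≤ C * ‖h‖ ^ 2) (hC : 0 ≤ C) (hlam : 0 < lam)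
    (hα : Measurable α) (hI : IntegrableOn (dCost f lam x α) (Ioi 0)) (hT : 0 < T) (h : Euc n) :
    uLam f lam (x + h) + uLam f lam (x - h) - 2 * ∫ t in Ioi 0, dCost f lam x α t
      ≤ (1 / T + C * T / 2) * ‖h‖ ^ 2 := by
  have hloc : ∀ b, IntegrableOn α (Ioc 0 b) := fun b =>
    (memLp_two_of_integrableOn_dCost hlo hlam.le hα hI b).integrable one_le_two
  have hg := integrableOn_dCost_shiftControl hf hlo hlam.le hα hI hT (x := x)
  have hbound : IntegrableOn ((Ioc 0 T).indicator
      fun t => ‖h‖ ^ 2 / T ^ 2 + C * ‖h‖ ^ 2 * (1 - t / T)) (Ioi 0) :=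
    ((Continuous.integrableOn_Ioc (by fun_prop)).integrable_indicator
      measurableSet_Ioc).integrableOn
  calc uLam f lam (x + h) + uLam f lam (x - h) - 2 * ∫ t in Ioi 0, dCost f lam x α t
      ≤ (∫ t in Ioi 0, dCost f lam (x + h) (shiftControl α T h) t)
        + (∫ t in Ioi 0, dCost f lam (x + -h) (shiftControl α T (-h)) t)
        - 2 * ∫ t in Ioi 0, dCost f lam x α t := by
        rw [sub_eq_add_neg x h]
        gcongr
        exacts [uLam_le_integral hlo hlam (measurable_shiftControl hα) (hg h),
          uLam_le_integral hlo hlam (measurable_shiftControl hα) (hg (-h))]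
    _ = ∫ t in Ioi 0, (dCost f lam (x + h) (shiftControl α T h) t
        + dCost f lam (x + -h) (shiftControl α T (-h)) t - 2 * dCost f lam x α t) := by
        rw [integral_sub, integral_add, integral_const_mul]
        exacts [hg h, hg (-h), (hg h).add (hg (-h)), hI.const_mul 2]
    _ ≤ ∫ t in Ioi 0, (Ioc 0 T).indicator
          (fun t => ‖h‖ ^ 2 / T ^ 2 + C * ‖h‖ ^ 2 * (1 - t / T)) t :=
        setIntegral_mono_on (((hg h).add (hg (-h))).sub (hI.const_mul 2)) hbound
          measurableSet_Ioi fun t ht =>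
            dCost_shiftControl_secondDiff_le hsc hC hlam.le hloc hT h ht
    _ = (1 / T + C * T / 2) * ‖h‖ ^ 2 := by
        rw [setIntegral_indicator measurableSet_Ioc, inter_eq_right.2 Ioc_subset_Ioi_self,
          integral_Ioc_affine_one_sub_div hT]
        field_simp

end Control

theorem stmt2_general {n : ℕ} (f : Euc n → ℝ) (flo C1 C2 : ℝ)
    (hlo : ∀ x, flo ≤ f x)
    (hlip : ∀ x y : Euc n, |f x - f y| ≤ C1 * dist x y)
    (hsc : ∀ x h : Euc n, f (x + h) + f (x - h) - 2 * f x ≤ C2 * ‖h‖ ^ 2)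
    (lam : ℝ) (hlam : 0 < lam) :
    ∀ x h : Euc n, uLam f lam (x + h) + uLam f lam (x - h) - 2 * uLam f lam x
      ≤ Real.sqrt (2 * (C1 + C2) + 1) * ‖h‖ ^ 2 := by
  intro x h
  obtain rfl | hh := eq_or_ne h 0
  · simp [two_mul]
  have : Nontrivial (Euc n) := nontrivial_of_ne h 0 hh
  have hC1 : 0 ≤ C1 := nonneg_of_mul_nonneg_left ((abs_nonneg _).trans (hlip x (x + h)))
    (dist_pos.2 (by simpa using hh))
  have hC2 : 0 ≤ C2 := nonneg_of_bddBelow_of_secondDiff_le hlo hsc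
  have hf : Continuous f :=
    (LipschitzWith.of_dist_le' fun x y => (Real.dist_eq _ _).trans_le (hlip x y)).continuous
  refine le_of_forall_pos_le_add fun ε hε => ?_
  obtain ⟨α, hα, hI, hαε⟩ := exists_integral_dCost_lt_uLam_add hlam x (half_pos hε)
  have hsecond := uLam_add_add_uLam_sub_le hf hlo hsc hC2 hlam hα hI
    (T := 2 / √(2 * C2 + 1)) (by positivity) h
  have hconst :=
    mul_le_mul_of_nonneg_right (one_div_add_mul_div_two_le_sqrt hC1 hC2) (sq_nonneg ‖h‖)
  linarith

/-- under assumptions (A) and (B), `u_lam` is semiconcave with constant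
`√(2(C₁+C₂)+1)`, independent of `lam`. -/
theorem stmt2 {n : ℕ} (f : Euc n → ℝ) (flo fhi C1 C2 : ℝ)
    (hcont : Continuous f) (hlo : ∀ x, flo ≤ f x) (hhi : ∀ x, f x ≤ fhi)
    (hattain : ∃ x, f x = flo)
    (hlip : ∀ x y : Euc n, |f x - f y| ≤ C1 * dist x y)
    (hsc : ∀ x h : Euc n, f (x + h) + f (x - h) - 2 * f x ≤ C2 * ‖h‖ ^ 2)
    (lam : ℝ) (hlam : 0 < lam) :
    ∀ x h : Euc n, uLam f lam (x + h) + uLam f lam (x - h) - 2 * uLam f lam x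
      ≤ Real.sqrt (2 * (C1 + C2) + 1) * ‖h‖ ^ 2 :=
  stmt2_general f flo C1 C2 hlo hlip hsc lam hlam
end

section
/- Under assumption (F), let α* be an optimal control for x with trajectory y* (extended with ℓ(y*(s)) = 0 for s ≥ t_x(α*), i.e. the trajectory stays in 𝔐 after the hitting time). Then for every δ > 0 and every t > 0 the fraction of time spent outside the set K_δ := {z : ℓ(z) ≤ δ} satisfies ρ^δ(t) := (1/t)·Leb{s ∈ [0,t] : ℓ(y*(s)) > δ} ≤ ℓ̄ · dist(x,𝔐) / (t δ); in particular ρ^δ(t) → 0 as t → +∞. -/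
open MeasureTheory Filter Metric Set Topology
open scoped ENNReal

noncomputable section

variable {n : ℕ}

/-- An admissible control: measurable with `‖α s‖ ≤ 1` for a.e. `s ≥ 0`. -/
def Admissible (α : ℝ → Euc n) : Prop :=
  Measurable α ∧ ∀ᵐ s ∂(volume : Measure ℝ), 0 ≤ s → ‖α s‖ ≤ 1

/-- Hitting time `t_x(α) = inf {s ≥ 0 : y_x^α(s) ∈ M}` (`∞` if the set is empty). -/
def hitTime (M : Set (Euc n)) (x : Euc n) (α : ℝ → Euc n) : ℝ≥0∞ :=
  ⨅ (s : ℝ) (_ : 0 ≤ s) (_ : traj x α s ∈ M), ENNReal.ofReal s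

/-- Cost `∫₀^{t_x(α)} ℓ(y_x^α(s)) ds` of a control (as an extended real, `ℓ ≥ 0`). -/
def cost (M : Set (Euc n)) (l : Euc n → ℝ) (x : Euc n) (α : ℝ → Euc n) : ℝ≥0∞ :=
  ∫⁻ s in {s : ℝ | 0 < s ∧ ENNReal.ofReal s < hitTime M x α},
    ENNReal.ofReal (l (traj x α s))

/-- The value function (extended-real valued). -/
def valE (M : Set (Euc n)) (l : Euc n → ℝ) (x : Euc n) : ℝ≥0∞ :=
  ⨅ (α : ℝ → Euc n) (_ : Admissible α), cost M l x α

/-- The value function `v`. -/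
def val (M : Set (Euc n)) (l : Euc n → ℝ) (x : Euc n) : ℝ := (valE M l x).toReal

/-- A control is optimal for `x` if it is admissible and attains the infimum. -/
def IsOptimal (M : Set (Euc n)) (l : Euc n → ℝ) (x : Euc n) (α : ℝ → Euc n) : Prop :=
  Admissible α ∧ cost M l x α = valE M l x

/-- The viscosity subdifferential `D⁻v(z)`. -/
def subDiff (v : Euc n → ℝ) (z : Euc n) : Set (Euc n) :=
  {p | ∀ ε > 0, ∀ᶠ x in 𝓝 z, v z + (inner ℝ p (x - z) : ℝ) - ε * ‖x - z‖ ≤ v x}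

/-- The viscosity superdifferential `D⁺v(z)`. -/
def superDiff (v : Euc n → ℝ) (z : Euc n) : Set (Euc n) :=
  {p | ∀ ε > 0, ∀ᶠ x in 𝓝 z, v x ≤ v z + (inner ℝ p (x - z) : ℝ) + ε * ‖x - z‖}

/-- The set of limiting gradients `D*v(z)`. -/
def limGrad (v : Euc n → ℝ) (z : Euc n) : Set (Euc n) :=
  {p | ∃ u : ℕ → Euc n, (∀ k, DifferentiableAt ℝ v (u k)) ∧
    Tendsto u atTop (𝓝 z) ∧ Tendsto (fun k => gradient v (u k)) atTop (𝓝 p)}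

/-- Distance of the trajectory to the target, with the trajectory extended so that it
remains in `M` after the hitting time. -/
def extDist (M : Set (Euc n)) (x : Euc n) (α : ℝ → Euc n) (t : ℝ) : ℝ :=
  if ENNReal.ofReal t < hitTime M x α then Metric.infDist (traj x α t) M else 0

end

/-!
Markov's inequality: before the hitting time, every unit of time spent where `l > δ`
costs at least `δ`, so `δ · t · ρ^δ(t)` is at most the optimal cost. Steering at unit speed
straight to a nearest point of `M` costs at most `sup l · dist(x, M)`, which therefore bounds
the optimal cost.
-/

section Trajectory

variable {n : ℕ} {x : Euc n} {α : ℝ → Euc n}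

lemma Admissible.integrableOn_Ioc (hα : Admissible α) {a b : ℝ} (ha : 0 ≤ a) :
    IntegrableOn α (Ioc a b) := by
  refine Integrable.mono' (integrable_const (1 : ℝ)) hα.1.aestronglyMeasurable.restrict ?_
  filter_upwards [ae_restrict_of_ae hα.2, ae_restrict_mem measurableSet_Ioc] with s hs hmem
  exact hs (ha.trans hmem.1.le)

lemma Admissible.dist_traj_le (hα : Admissible α) (x : Euc n) {a b : ℝ} (ha : 0 ≤ a)
    (hab : a ≤ b) : dist (traj x α b) (traj x α a) ≤ b - a := by
  have hsplit : ∫ s in Ioc 0 b, α s = (∫ s in Ioc 0 a, α s) + ∫ s in Ioc a b, α s := by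
    rw [← Ioc_union_Ioc_eq_Ioc ha hab, setIntegral_union (Ioc_disjoint_Ioc_of_le le_rfl)
      measurableSet_Ioc (hα.integrableOn_Ioc le_rfl) (hα.integrableOn_Ioc ha)]
  have hnorm : ‖∫ s in Ioc a b, α s‖ ≤ 1 * volume.real (Ioc a b) := by
    refine norm_setIntegral_le_of_norm_le_const_ae' measure_Ioc_lt_top ?_
    filter_upwards [hα.2] with s hs hmem
    exact hs (ha.trans hmem.1.le)
  rw [Real.volume_real_Ioc_of_le hab, one_mul] at hnorm
  simpa [traj, dist_eq_norm, hsplit] using hnorm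

lemma traj_of_nonpos (x : Euc n) (α : ℝ → Euc n) {t : ℝ} (ht : t ≤ 0) : traj x α t = x := by
  simp [traj, Ioc_eq_empty (not_lt.mpr ht)]

lemma traj_max_zero (x : Euc n) (α : ℝ → Euc n) (t : ℝ) :
    traj x α (max t 0) = traj x α t := by
  rcases le_total t 0 with h | h
  · rw [max_eq_right h, traj_of_nonpos x α le_rfl, traj_of_nonpos x α h]
  · rw [max_eq_left h]

lemma Admissible.lipschitzWith_traj (hα : Admissible α) (x : Euc n) :
    LipschitzWith 1 (traj x α) := by
  have hmax : ∀ a b : ℝ, a ≤ b → dist (traj x α b) (traj x α a) ≤ dist b a := by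
    intro a b hab
    rw [← traj_max_zero x α a, ← traj_max_zero x α b]
    calc dist (traj x α (max b 0)) (traj x α (max a 0)) ≤ max b 0 - max a 0 :=
          hα.dist_traj_le x (le_max_right a 0) (max_le_max_right 0 hab)
      _ ≤ dist b a := (le_abs_self _).trans (abs_max_sub_max_le_abs b a 0)
  refine LipschitzWith.of_dist_le_mul fun a b => ?_
  rw [NNReal.coe_one, one_mul]
  rcases le_total a b with h | h
  · rw [dist_comm, dist_comm a]; exact hmax a b h
  · exact hmax b a h

lemma traj_const (x c : Euc n) {t : ℝ} (ht : 0 ≤ t) : traj x (fun _ => c) t = x + t • c := by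
  simp [traj, Real.volume_real_Ioc_of_le ht]

end Trajectory

section Value

variable {n : ℕ} {M : Set (Euc n)} {l : Euc n → ℝ} {x : Euc n} {α : ℝ → Euc n}

lemma hitTime_le_ofReal {t : ℝ} (ht : 0 ≤ t) (hmem : traj x α t ∈ M) :
    hitTime M x α ≤ ENNReal.ofReal t :=
  iInf₂_le_of_le t ht (iInf_le _ hmem)

lemma cost_le_of_hitTime_le {T L : ℝ} (hT : hitTime M x α ≤ ENNReal.ofReal T)
    (hL : ∀ z, l z ≤ L) (hL0 : 0 ≤ L) : cost M l x α ≤ ENNReal.ofReal (L * T) := by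
  have hsub : {s : ℝ | 0 < s ∧ ENNReal.ofReal s < hitTime M x α} ⊆ Ioc 0 T :=
    fun s ⟨hs0, hsT⟩ =>
      ⟨hs0, ((ENNReal.ofReal_lt_ofReal_iff_of_nonneg hs0.le).mp (hsT.trans_le hT)).le⟩
  calc cost M l x α ≤ ∫⁻ _ in Ioc 0 T, ENNReal.ofReal L :=
        (lintegral_mono_set hsub).trans
          (lintegral_mono fun s => ENNReal.ofReal_le_ofReal (hL _))
    _ = ENNReal.ofReal (L * T) := by
        rw [setLIntegral_const, Real.volume_Ioc, sub_zero, ENNReal.ofReal_mul hL0]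

lemma valE_le_of_traj_mem {β : ℝ → Euc n} (hβ : Admissible β) {T L : ℝ} (hT : 0 ≤ T)
    (hmem : traj x β T ∈ M) (hL : ∀ z, l z ≤ L) (hL0 : 0 ≤ L) :
    valE M l x ≤ ENNReal.ofReal (L * T) :=
  (iInf₂_le β hβ).trans (cost_le_of_hitTime_le (hitTime_le_ofReal hT hmem) hL hL0)

lemma exists_admissible_traj_infDist_mem (hMcl : IsClosed M) (hMne : M.Nonempty)
    (x : Euc n) : ∃ β : ℝ → Euc n, Admissible β ∧ traj x β (infDist x M) ∈ M := by
  obtain ⟨z, hzM, hdist⟩ := hMcl.exists_infDist_eq_dist hMne x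
  -- since `‖0‖⁻¹ = 0`, this is the zero control when `x ∈ M`
  refine ⟨fun _ => ‖z - x‖⁻¹ • (z - x), ⟨measurable_const, .of_forall fun _ _ => ?_⟩, ?_⟩
  · rcases eq_or_ne (z - x) 0 with h | h
    · simp [h]
    · exact (norm_smul_inv_norm h).le
  · rw [traj_const x _ infDist_nonneg, hdist, dist_comm, dist_eq_norm, smul_smul]
    rcases eq_or_ne (z - x) 0 with h | h
    · simpa [sub_eq_zero.mp h] using hzM
    · simpa [mul_inv_cancel₀ (norm_ne_zero_iff.mpr h)] using hzM

lemma valE_le_mul_infDist (hMcl : IsClosed M) (hMne : M.Nonempty) {L : ℝ}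
    (hL : ∀ z, l z ≤ L) (hL0 : 0 ≤ L) (x : Euc n) :
    valE M l x ≤ ENNReal.ofReal (L * infDist x M) :=
  have ⟨_, hβ, hmem⟩ := exists_admissible_traj_infDist_mem hMcl hMne x
  valE_le_of_traj_mem hβ infDist_nonneg hmem hL hL0

lemma Admissible.ofReal_mul_volume_le_cost (hα : Admissible α) (hl : Continuous l) (δ : ℝ) :
    ENNReal.ofReal δ * volume {s | 0 < s ∧ ENNReal.ofReal s < hitTime M x α ∧
      δ < l (traj x α s)} ≤ cost M l x α := by
  set S := {s : ℝ | 0 < s ∧ ENNReal.ofReal s < hitTime M x α}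
  have hmeas : Measurable fun s => ENNReal.ofReal (l (traj x α s)) :=
    ENNReal.measurable_ofReal.comp (hl.comp (hα.lipschitzWith_traj x).continuous).measurable
  calc _ ≤ ENNReal.ofReal δ *
        volume.restrict S {s | ENNReal.ofReal δ ≤ ENNReal.ofReal (l (traj x α s))} := by
        refine mul_le_mul_right
          ((measure_mono fun s hs => ?_).trans (Measure.le_restrict_apply _ _)) _
        exact ⟨ENNReal.ofReal_le_ofReal hs.2.2.le, hs.1, hs.2.1⟩
    _ ≤ cost M l x α := mul_meas_ge_le_lintegral₀ hmeas.aemeasurable _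

lemma IsOptimal.ofReal_mul_volume_le (hopt : IsOptimal M l x α) (hMcl : IsClosed M)
    (hMne : M.Nonempty) (hl : Continuous l) {L : ℝ} (hL : ∀ z, l z ≤ L) (hL0 : 0 ≤ L)
    (δ t : ℝ) :
    ENNReal.ofReal δ * volume {s | s ∈ Icc 0 t ∧ ENNReal.ofReal s < hitTime M x α ∧
      δ < l (traj x α s)} ≤ ENNReal.ofReal (L * infDist x M) := by
  have hsub : {s | s ∈ Icc 0 t ∧ ENNReal.ofReal s < hitTime M x α ∧ δ < l (traj x α s)} ⊆
      {s | 0 < s ∧ ENNReal.ofReal s < hitTime M x α ∧ δ < l (traj x α s)} ∪ {0} := by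
    rintro s ⟨⟨hs0, -⟩, hs⟩
    rcases hs0.eq_or_lt with rfl | hs0
    · exact Or.inr rfl
    · exact Or.inl ⟨hs0, hs⟩
  calc _ ≤ ENNReal.ofReal δ *
        volume {s | 0 < s ∧ ENNReal.ofReal s < hitTime M x α ∧ δ < l (traj x α s)} := by
        refine mul_le_mul_right ((measure_mono hsub).trans ?_) _
        simpa using measure_union_le (μ := volume) _ ({0} : Set ℝ)
    _ ≤ cost M l x α := hopt.1.ofReal_mul_volume_le_cost hl δ
    _ = valE M l x := hopt.2
    _ ≤ ENNReal.ofReal (L * infDist x M) := valE_le_mul_infDist hMcl hMne hL hL0 x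

end Value

theorem stmt11_general {n : ℕ} (M : Set (Euc n)) (l : Euc n → ℝ)
    (hMne : M.Nonempty) (hMcl : IsClosed M)
    (hlc : Continuous l) (hlbd : BddAbove (Set.range l))
    (hlzero : ∀ z ∈ M, l z = 0)
    (x : Euc n) (α : ℝ → Euc n) (hopt : IsOptimal M l x α) :
    (∀ δ : ℝ, 0 < δ → ∀ t : ℝ, 0 < t →
      (volume {s : ℝ | s ∈ Set.Icc 0 t ∧ ENNReal.ofReal s < hitTime M x α ∧
          δ < l (traj x α s)}).toReal / t
        ≤ sSup (Set.range l) * Metric.infDist x M / (t * δ)) ∧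
    (∀ δ : ℝ, 0 < δ →
      Tendsto (fun t : ℝ =>
        (volume {s : ℝ | s ∈ Set.Icc 0 t ∧ ENNReal.ofReal s < hitTime M x α ∧
          δ < l (traj x α s)}).toReal / t) atTop (𝓝 0)) := by
  set L := sSup (range l)
  have hL : ∀ z, l z ≤ L := fun z => le_csSup hlbd (mem_range_self z)
  have hL0 : 0 ≤ L := hlzero _ hMne.some_mem ▸ hL hMne.some
  have hLd : 0 ≤ L * infDist x M := mul_nonneg hL0 infDist_nonneg
  have hbound : ∀ δ : ℝ, 0 < δ → ∀ t : ℝ, 0 < t →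
      (volume {s : ℝ | s ∈ Icc 0 t ∧ ENNReal.ofReal s < hitTime M x α ∧
          δ < l (traj x α s)}).toReal / t ≤ L * infDist x M / (t * δ) := by
    intro δ hδ t ht
    have key := ENNReal.toReal_mono ENNReal.ofReal_ne_top
      (hopt.ofReal_mul_volume_le hMcl hMne hlc hL hL0 δ t)
    rw [ENNReal.toReal_mul, ENNReal.toReal_ofReal hδ.le, ENNReal.toReal_ofReal hLd] at key
    rw [div_le_div_iff₀ ht (mul_pos ht hδ)]
    nlinarith
  refine ⟨hbound, fun δ hδ => squeeze_zero' ?_ ?_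
    ((tendsto_const_nhds (x := L * infDist x M)).div_atTop (tendsto_id.atTop_mul_const hδ))⟩
  · filter_upwards [eventually_gt_atTop 0] with t ht
    positivity
  · filter_upwards [eventually_gt_atTop 0] with t ht
    exact hbound δ hδ t ht

/-- under assumption (F), along an optimal trajectory (extended to stay in
`M` after the hitting time) the fraction of time spent where `l > δ` satisfies
`ρ^δ(t) ≤ ℓ̄ · dist(x,M) / (t δ)`; in particular `ρ^δ(t) → 0` as `t → +∞`. -/
theorem stmt11 {n : ℕ} (M : Set (Euc n)) (l : Euc n → ℝ)
    (hMne : M.Nonempty) (hMcl : IsClosed M)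
    (hlc : Continuous l) (hlbd : BddAbove (Set.range l))
    (hlpos : ∀ z ∉ M, 0 < l z) (hlzero : ∀ z ∈ M, l z = 0)
    (x : Euc n) (α : ℝ → Euc n) (hopt : IsOptimal M l x α) :
    (∀ δ : ℝ, 0 < δ → ∀ t : ℝ, 0 < t →
      (volume {s : ℝ | s ∈ Set.Icc 0 t ∧ ENNReal.ofReal s < hitTime M x α ∧
          δ < l (traj x α s)}).toReal / t
        ≤ sSup (Set.range l) * Metric.infDist x M / (t * δ)) ∧
    (∀ δ : ℝ, 0 < δ →
      Tendsto (fun t : ℝ =>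
        (volume {s : ℝ | s ∈ Set.Icc 0 t ∧ ENNReal.ofReal s < hitTime M x α ∧
          δ < l (traj x α s)}).toReal / t) atTop (𝓝 0)) :=
  stmt11_general M l hMne hMcl hlc hlbd hlzero x α hopt
end
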